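/- If a finite collection of tiles forms a disjoint covering of the dyadic rectangle S_n = [0,1) × [0, 2^n), then the corresponding rescaled Walsh functions {w_p} form an orthonormal basis of the 2^n-dimensional space of functions on [0,1) that are constant on each dyadic interval [k 2^{-n}, (k+1) 2^{-n}). -/

import Mathlib

open MeasureTheory

/-- The tile `p(j,k,l) = [2^{-j}k, 2^{-j}(k+1)) × [2^j l, 2^j(l+1))`. -/
def tile (p : ℕ × ℕ × ℕ) : Set (ℝ × ℝ) :=
  Set.Ico ((2:ℝ) ^ (-(p.1:ℤ)) * p.2.1) ((2:ℝ) ^ (-(p.1:ℤ)) * (p.2.1 + 1)) ×ˢ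
  Set.Ico ((2:ℝ) ^ (p.1:ℤ) * p.2.2) ((2:ℝ) ^ (p.1:ℤ) * (p.2.2 + 1))

lemma neg_one_pow_two_mul' (q : ℕ) : ((-1:ℝ))^(2*q) = 1 := by
  rw [pow_mul]; norm_num

lemma grid_val (N J K i' : ℕ) (hj : J ≤ N) :
    (2:ℝ)^J * (((K * 2^(N-J) + i' : ℕ):ℝ)/2^N) - K = (i':ℝ)/2^(N-J) := by
  have h : (2:ℝ)^N = 2^J * 2^(N-J) := by rw [← pow_add, Nat.add_sub_cancel' hj]
  have h1 : (0:ℝ) < 2^N := by positivity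
  have h2 : (0:ℝ) < 2^(N-J) := by positivity
  push_cast
  rw [h]
  field_simp
  ring

lemma grid_bounds (N J K i' : ℕ) (hj : J ≤ N) (hi : i' < 2^(N-J)) :
    (K:ℝ)/2^J ≤ ((K * 2^(N-J) + i' : ℕ):ℝ)/2^N ∧
    ((K * 2^(N-J) + i' : ℕ):ℝ)/2^N < ((K:ℝ)+1)/2^J := by
  have h : (2:ℝ)^N = 2^J * 2^(N-J) := by rw [← pow_add, Nat.add_sub_cancel' hj]
  have h1 : (0:ℝ) < 2^N := by positivity
  have h2 : (0:ℝ) < 2^(N-J) := by positivity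
  have h3 : (0:ℝ) < 2^J := by positivity
  have hiR : (i':ℝ) < 2^(N-J) := by exact_mod_cast hi
  have hi0 : (0:ℝ) ≤ (i':ℝ) := Nat.cast_nonneg _
  constructor
  · rw [div_le_div_iff₀ h3 h1]
    push_cast
    rw [h]; nlinarith
  · rw [div_lt_div_iff₀ h1 h3]
    push_cast
    rw [h]; nlinarith
section helpers

lemma rpow_split (j j' : ℕ) (h : j ≤ j') : (2:ℝ)^j' = 2^j * 2^(j'-j) := by
  rw [← pow_add, Nat.add_sub_cancel' h]

lemma dy_le (j j' a b : ℕ) (h : j ≤ j') (hab : a * 2^(j'-j) ≤ b) :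
    (2:ℝ)^(-(j:ℤ)) * a ≤ (2:ℝ)^(-(j':ℤ)) * b := by
  rw [zpow_neg, zpow_neg, zpow_natCast, zpow_natCast, inv_mul_eq_div, inv_mul_eq_div,
    div_le_div_iff₀ (by positivity) (by positivity), rpow_split j j' h]
  have : ((a * 2^(j'-j) : ℕ):ℝ) ≤ (b:ℝ) := by exact_mod_cast hab
  push_cast at this
  nlinarith [pow_pos (by norm_num : (0:ℝ)<2) j, pow_pos (by norm_num : (0:ℝ)<2) (j'-j)]

lemma dy_lt (j j' a b : ℕ) (h : j ≤ j') (hab : b < a * 2^(j'-j)) :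
    (2:ℝ)^(-(j':ℤ)) * b < (2:ℝ)^(-(j:ℤ)) * a := by
  rw [zpow_neg, zpow_neg, zpow_natCast, zpow_natCast, inv_mul_eq_div, inv_mul_eq_div,
    div_lt_div_iff₀ (by positivity) (by positivity), rpow_split j j' h]
  have : (b:ℝ) < ((a * 2^(j'-j) : ℕ):ℝ) := by exact_mod_cast hab
  push_cast at this
  nlinarith [pow_pos (by norm_num : (0:ℝ)<2) j, pow_pos (by norm_num : (0:ℝ)<2) (j'-j)]

lemma fr_le (j j' a b : ℕ) (h : j ≤ j') (hab : 2^(j'-j) * b ≤ a) :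
    (2:ℝ)^(j':ℤ) * b ≤ (2:ℝ)^(j:ℤ) * a := by
  rw [zpow_natCast, zpow_natCast, rpow_split j j' h]
  have : ((2^(j'-j) * b : ℕ):ℝ) ≤ (a:ℝ) := by exact_mod_cast hab
  push_cast at this
  nlinarith [pow_pos (by norm_num : (0:ℝ)<2) j, pow_pos (by norm_num : (0:ℝ)<2) (j'-j)]

lemma fr_lt (j j' a b : ℕ) (h : j ≤ j') (hab : a < 2^(j'-j) * b) :
    (2:ℝ)^(j:ℤ) * a < (2:ℝ)^(j':ℤ) * b := by
  rw [zpow_natCast, zpow_natCast, rpow_split j j' h]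
  have : (a:ℝ) < ((2^(j'-j) * b : ℕ):ℝ) := by exact_mod_cast hab
  push_cast at this
  nlinarith [pow_pos (by norm_num : (0:ℝ)<2) j, pow_pos (by norm_num : (0:ℝ)<2) (j'-j)]

end helpers

lemma tile_cases (j k l j' k' l' : ℕ) (hjj' : j ≤ j')
    (hd : Disjoint (tile (j,k,l)) (tile (j',k',l')))
    (hnest1 : 2^(j'-j) * k ≤ k') (hnest2 : k' < 2^(j'-j) * (k+1)) :
    l / 2^(j'-j) ≠ l' := by
  intro heq
  have hdpos : 0 < 2^(j'-j) := Nat.pow_pos (by norm_num)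
  have hmod := Nat.mod_lt l hdpos
  have hdivmul := Nat.div_add_mod l (2^(j'-j))
  have hjp : (0:ℝ) < (2:ℝ)^(j:ℤ) := by positivity
  have hjp' : (0:ℝ) < (2:ℝ)^(-(j':ℤ)) := by positivity
  have m1 : (2:ℝ)^(-(j:ℤ)) * k ≤ (2:ℝ)^(-(j':ℤ)) * k' :=
    dy_le j j' k k' hjj' (by rw [mul_comm] at hnest1; exact hnest1)
  have m2 : (2:ℝ)^(-(j':ℤ)) * k' < (2:ℝ)^(-(j:ℤ)) * ((k:ℝ)+1) := by
    have := dy_lt j j' (k+1) k' hjj' (by rw [mul_comm] at hnest2; exact hnest2)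
    push_cast at this; exact this
  have m3 : (2:ℝ)^(j':ℤ) * l' ≤ (2:ℝ)^(j:ℤ) * l := by
    refine fr_le j j' l l' hjj' ?_
    rw [← heq, mul_comm]
    exact Nat.div_mul_le_self l _
  have m4 : (2:ℝ)^(j:ℤ) * l < (2:ℝ)^(j':ℤ) * ((l':ℝ)+1) := by
    have hexp : 2^(j'-j)*(l'+1) = 2^(j'-j)*(l/2^(j'-j)) + 2^(j'-j) := by rw [← heq]; ring
    have := fr_lt j j' l (l'+1) hjj' (by omega)
    push_cast at this; exact this
  have hx1 : (((2:ℝ)^(-(j':ℤ)) * k', (2:ℝ)^(j:ℤ) * l) : ℝ × ℝ) ∈ tile (j,k,l) := by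
    simp only [tile, Set.mem_prod, Set.mem_Ico]
    refine ⟨⟨m1, m2⟩, le_refl _, ?_⟩
    have : (l:ℝ) < (l:ℝ)+1 := by linarith
    nlinarith
  have hx2 : (((2:ℝ)^(-(j':ℤ)) * k', (2:ℝ)^(j:ℤ) * l) : ℝ × ℝ) ∈ tile (j',k',l') := by
    simp only [tile, Set.mem_prod, Set.mem_Ico]
    refine ⟨⟨le_refl _, ?_⟩, m3, m4⟩
    have : (k':ℝ) < (k':ℝ)+1 := by linarith
    nlinarith
  exact Set.disjoint_left.mp hd hx1 hx2
section walsh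
variable (W : ℕ → ℝ → ℝ)
variable (hW0 : ∀ t : ℝ, W 0 t = if 0 ≤ t ∧ t < 1 then 1 else 0)
variable (hWeven : ∀ (l : ℕ) (t : ℝ),
      W (2 * l) t = W l (2 * t) + (-1 : ℝ) ^ l * W l (2 * t - 1))
variable (hWodd : ∀ (l : ℕ) (t : ℝ),
      W (2 * l + 1) t = W l (2 * t) - (-1 : ℝ) ^ l * W l (2 * t - 1))

include hW0 hWeven hWodd

lemma walsh_supp : ∀ l (t : ℝ), (t < 0 ∨ 1 ≤ t) → W l t = 0 := by
  intro l
  induction l using Nat.strong_induction_on with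
  | _ l ih =>
    intro t ht
    match l with
    | 0 =>
      rw [hW0]
      rcases ht with h | h
      · simp [not_le.mpr h]
      · have : ¬ (t < 1) := not_lt.mpr h
        simp [this]
    | Nat.succ m =>
      have hl2 : (m+1)/2 < m+1 := Nat.div_lt_self (Nat.succ_pos m) one_lt_two
      have h2t : (2*t < 0 ∨ 1 ≤ 2*t) := by rcases ht with h|h; exacts [Or.inl (by linarith), Or.inr (by linarith)]
      have h2t1 : (2*t-1 < 0 ∨ 1 ≤ 2*t-1) := by rcases ht with h|h; exacts [Or.inl (by linarith), Or.inr (by linarith)]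
      have e1 := ih ((m+1)/2) hl2 (2*t) h2t
      have e2 := ih ((m+1)/2) hl2 (2*t-1) h2t1
      show W (m+1) t = 0
      rcases Nat.even_or_odd (m+1) with ⟨q, hq⟩ | ⟨q, hq⟩
      · have h : m+1 = 2*q := by omega
        have hq2 : (m+1)/2 = q := by omega
        rw [hq2] at e1 e2
        rw [h, hWeven, e1, e2]; ring
      · have h : m+1 = 2*q+1 := by omega
        have hq2 : (m+1)/2 = q := by omega
        rw [hq2] at e1 e2
        rw [h, hWodd, e1, e2]; ring

lemma walsh_left : ∀ l (t : ℝ), 0 ≤ t → t < 1/2 → W l t = W (l/2) (2*t) := by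
  intro l t h0 h1
  have hz : W (l/2) (2*t-1) = 0 := walsh_supp W hW0 hWeven hWodd _ _ (Or.inl (by linarith))
  rcases Nat.even_or_odd l with ⟨q, hq⟩ | ⟨q, hq⟩
  · have h : l = 2*q := by omega
    have hq2 : l/2 = q := by omega
    rw [hq2] at hz ⊢
    rw [h, hWeven, hz]; ring
  · have h : l = 2*q+1 := by omega
    have hq2 : l/2 = q := by omega
    rw [hq2] at hz ⊢
    rw [h, hWodd, hz]; ring

lemma walsh_right : ∀ l (t : ℝ), 1/2 ≤ t → t < 1 →
    W l t = (-1:ℝ)^(l/2+l) * W (l/2) (2*t-1) := by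
  intro l t h0 h1
  have hz : W (l/2) (2*t) = 0 := walsh_supp W hW0 hWeven hWodd _ _ (Or.inr (by linarith))
  rcases Nat.even_or_odd l with ⟨q, hq⟩ | ⟨q, hq⟩
  · have h : l = 2*q := by omega
    have hq2 : l/2 = q := by omega
    rw [hq2] at hz ⊢
    rw [h, hWeven, hz]
    have hE : (-1:ℝ)^(q+2*q) = (-1:ℝ)^q := by
      rw [pow_add, neg_one_pow_two_mul', mul_one]
    rw [hE]; ring
  · have h : l = 2*q+1 := by omega
    have hq2 : l/2 = q := by omega
    rw [hq2] at hz ⊢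
    rw [h, hWodd, hz]
    have hE : (-1:ℝ)^(q+(2*q+1)) = -(-1:ℝ)^q := by
      rw [pow_add, pow_succ, neg_one_pow_two_mul']; ring
    rw [hE]; ring

lemma walsh_restrict : ∀ (m l k : ℕ), k < 2^m → ∃ ε:ℝ, ∀ t:ℝ,
    (k:ℝ)/2^m ≤ t → t < ((k:ℝ)+1)/2^m → W l t = ε * W (l/2^m) ((2:ℝ)^m * t - k) := by
  intro m
  induction m with
  | zero =>
    intro l k hk
    interval_cases k
    exact ⟨1, fun t _ _ => by norm_num⟩
  | succ m ih =>
    intro l k hk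
    have hpos : (0:ℝ) < 2^m := by positivity
    have hpos' : (0:ℝ) < 2^(m+1) := by positivity
    have hss : (2:ℝ)^(m+1) = 2*2^m := by rw [pow_succ]; ring
    have hdiv : l / 2 / 2^m = l / 2^(m+1) := by
      rw [Nat.div_div_eq_div_mul]; congr 1; rw [pow_succ]; ring
    by_cases hkm : k < 2^m
    · obtain ⟨ε, hε⟩ := ih (l/2) k hkm
      refine ⟨ε, fun t h1 h2 => ?_⟩
      have hA : (k:ℝ) ≤ t * 2^(m+1) := (div_le_iff₀ hpos').mp h1
      have hB : t * 2^(m+1) < (k:ℝ)+1 := (lt_div_iff₀ hpos').mp h2 |>.trans_le le_rfl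
      have hkR : ((k:ℝ)+1) ≤ 2^m := by exact_mod_cast Nat.cast_le.mpr hkm
      have ht0 : 0 ≤ t := le_trans (by positivity) h1
      have hth : t < 1/2 := by nlinarith
      rw [walsh_left W hW0 hWeven hWodd l t ht0 hth]
      have h1' : (k:ℝ)/2^m ≤ 2*t := by rw [div_le_iff₀ hpos]; nlinarith
      have h2' : 2*t < ((k:ℝ)+1)/2^m := by rw [lt_div_iff₀ hpos]; nlinarith
      rw [hε (2*t) h1' h2', hdiv]
      congr 2
      rw [hss]; ring
    · obtain ⟨ε, hε⟩ := ih (l/2) (k - 2^m) (by omega)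
      refine ⟨(-1:ℝ)^(l/2+l) * ε, fun t h1 h2 => ?_⟩
      have hA : (k:ℝ) ≤ t * 2^(m+1) := (div_le_iff₀ hpos').mp h1
      have hB : t * 2^(m+1) < (k:ℝ)+1 := (lt_div_iff₀ hpos').mp h2
      have hk2 : (2^m : ℝ) ≤ (k:ℝ) := by exact_mod_cast Nat.cast_le.mpr (not_lt.mp hkm)
      have hk3 : ((k:ℝ)+1) ≤ 2^(m+1) := by exact_mod_cast Nat.succ_le_of_lt hk
      have hth : 1/2 ≤ t := by nlinarith
      have ht1 : t < 1 := by nlinarith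
      rw [walsh_right W hW0 hWeven hWodd l t hth ht1]
      have hcast : ((k - 2^m : ℕ) : ℝ) = (k:ℝ) - 2^m := by
        have h : (2^m:ℕ) ≤ k := not_lt.mp hkm
        push_cast [h]; ring
      have h1' : (((k - 2^m : ℕ)):ℝ)/2^m ≤ 2*t-1 := by
        rw [hcast, div_le_iff₀ hpos]; nlinarith
      have h2' : 2*t-1 < ((((k - 2^m : ℕ)):ℝ)+1)/2^m := by
        rw [hcast, lt_div_iff₀ hpos]; nlinarith
      rw [hε (2*t-1) h1' h2', hdiv, mul_assoc]
      congr 3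
      rw [hcast, hss]; ring

lemma walsh_const : ∀ (m l k : ℕ), l < 2^m → k < 2^m → ∀ s t : ℝ,
    (k:ℝ)/2^m ≤ s → s < ((k:ℝ)+1)/2^m → (k:ℝ)/2^m ≤ t → t < ((k:ℝ)+1)/2^m →
    W l s = W l t := by
  intro m l k hl hk s t hs1 hs2 ht1 ht2
  obtain ⟨ε, hε⟩ := walsh_restrict W hW0 hWeven hWodd m l k hk
  have hl0 : l / 2^m = 0 := Nat.div_eq_of_lt hl
  have hpos : (0:ℝ) < 2^m := by positivity
  have key : ∀ u : ℝ, (k:ℝ)/2^m ≤ u → u < ((k:ℝ)+1)/2^m → W l u = ε := by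
    intro u h1 h2
    rw [hε u h1 h2, hl0, hW0]
    have c1 : (0:ℝ) ≤ 2^m * u - k := by
      rw [div_le_iff₀ hpos] at h1; nlinarith
    have c2 : (2:ℝ)^m * u - k < 1 := by
      rw [lt_div_iff₀ hpos] at h2; nlinarith
    simp [c1, c2]
  rw [key s hs1 hs2, key t ht1 ht2]


lemma walsh_disc_orth : ∀ (m a b : ℕ), a < 2^m → b < 2^m →
    (∑ i ∈ Finset.range (2^m), W a ((i:ℝ)/2^m) * W b ((i:ℝ)/2^m))
      = if a = b then (2^m:ℝ) else 0 := by
  intro m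
  induction m with
  | zero =>
    intro a b ha hb
    interval_cases a; interval_cases b
    simp [hW0]
  | succ m ih =>
    intro a b ha hb
    have hpos : (0:ℝ) < 2^m := by positivity
    have hpos' : (0:ℝ) < 2^(m+1) := by positivity
    have hss : (2:ℝ)^(m+1) = 2*2^m := by rw [pow_succ]; ring
    have hsplit : (2:ℕ)^(m+1) = 2^m + 2^m := by rw [pow_succ]; ring
    rw [hsplit, Finset.sum_range_add]
    have e1 : ∀ i ∈ Finset.range (2^m),
        W a ((i:ℝ)/2^(m+1)) * W b ((i:ℝ)/2^(m+1))
        = W (a/2) ((i:ℝ)/2^m) * W (b/2) ((i:ℝ)/2^m) := by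
      intro i hi
      have hi' : (i:ℝ) < 2^m := by
        exact_mod_cast Nat.cast_lt.mpr (Finset.mem_range.mp hi)
      have h0 : (0:ℝ) ≤ (i:ℝ)/2^(m+1) := by positivity
      have h1 : (i:ℝ)/2^(m+1) < 1/2 := by rw [div_lt_iff₀ hpos']; nlinarith
      have harg : 2*((i:ℝ)/2^(m+1)) = (i:ℝ)/2^m := by
        rw [hss]; field_simp
      rw [walsh_left W hW0 hWeven hWodd a _ h0 h1, walsh_left W hW0 hWeven hWodd b _ h0 h1, harg]
    have e2 : ∀ i ∈ Finset.range (2^m),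
        W a (((2^m + i : ℕ):ℝ)/2^(m+1)) * W b (((2^m + i : ℕ):ℝ)/2^(m+1))
        = ((-1:ℝ)^(a/2+a) * (-1:ℝ)^(b/2+b)) * (W (a/2) ((i:ℝ)/2^m) * W (b/2) ((i:ℝ)/2^m)) := by
      intro i hi
      have hi' : (i:ℝ) < 2^m := by
        exact_mod_cast Nat.cast_lt.mpr (Finset.mem_range.mp hi)
      have hi0 : (0:ℝ) ≤ (i:ℝ) := Nat.cast_nonneg i
      have hcast : ((2^m + i : ℕ):ℝ) = 2^m + (i:ℝ) := by push_cast; ring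
      rw [hcast]
      have h0 : 1/2 ≤ ((2:ℝ)^m + i)/2^(m+1) := by rw [le_div_iff₀ hpos']; nlinarith
      have h1 : ((2:ℝ)^m + i)/2^(m+1) < 1 := by rw [div_lt_iff₀ hpos']; nlinarith
      have harg : 2*(((2:ℝ)^m + i)/2^(m+1)) - 1 = (i:ℝ)/2^m := by
        rw [hss]; field_simp; ring
      rw [walsh_right W hW0 hWeven hWodd a _ h0 h1, walsh_right W hW0 hWeven hWodd b _ h0 h1, harg]
      ring
    rw [Finset.sum_congr rfl e1, Finset.sum_congr rfl e2]
    rw [← Finset.mul_sum]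
    have ha2 : a/2 < 2^m := by omega
    have hb2 : b/2 < 2^m := by omega
    rw [ih (a/2) (b/2) ha2 hb2]
    by_cases hab : a = b
    · subst hab
      have hsgn : (-1:ℝ)^(a/2+a) * (-1:ℝ)^(a/2+a) = 1 := by
        rw [← pow_add]
        exact Even.neg_one_pow ⟨a/2+a, by ring⟩
      rw [if_pos rfl, if_pos rfl, hsgn, hss]; ring
    · by_cases hq : a/2 = b/2
      · have hodd : Odd (a/2 + a + (b/2 + b)) := by rw [Nat.odd_iff]; omega
        have hsgn : (-1:ℝ)^(a/2+a) * (-1:ℝ)^(b/2+b) = -1 := by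
          rw [← pow_add]
          exact Odd.neg_one_pow hodd
        rw [if_pos hq, if_neg hab, hsgn]; ring
      · rw [if_neg hq, if_neg hab]; ring

lemma grid_zero (n j k l i : ℕ) (hj : j ≤ n)
    (hout : i < k*2^(n-j) ∨ (k+1)*2^(n-j) ≤ i) :
    W l ((2:ℝ)^j * ((i:ℝ)/2^n) - k) = 0 := by
  apply walsh_supp W hW0 hWeven hWodd
  have h : (2:ℝ)^n = 2^j * 2^(n-j) := by rw [← pow_add, Nat.add_sub_cancel' hj]
  have h1 : (0:ℝ) < 2^n := by positivity
  have h2 : (0:ℝ) < 2^(n-j) := by positivity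
  have h3 : (0:ℝ) < 2^j := by positivity
  rcases hout with ho | ho
  · left
    have hiR : (i:ℝ) < (k:ℝ)*2^(n-j) := by exact_mod_cast ho
    have : (2:ℝ)^j * ((i:ℝ)/2^n) < k := by
      rw [mul_div_assoc', div_lt_iff₀ h1, h]; nlinarith
    linarith
  · right
    have hiR : ((k:ℝ)+1)*2^(n-j) ≤ (i:ℝ) := by exact_mod_cast ho
    have : (k:ℝ)+1 ≤ (2:ℝ)^j * ((i:ℝ)/2^n) := by
      rw [mul_div_assoc', le_div_iff₀ h1, h]; nlinarith
    linarith

lemma tile_sum_diag (n j k l : ℕ) (hj : j ≤ n) (hk : k < 2^j) (hl : l < 2^(n-j)) :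
    ∑ i ∈ Finset.range (2^n),
      (Real.sqrt ((2:ℝ)^j) * W l ((2:ℝ)^j * ((i:ℝ)/2^n) - k)) *
      (Real.sqrt ((2:ℝ)^j) * W l ((2:ℝ)^j * ((i:ℝ)/2^n) - k)) = 2^n := by
  have hsub : Finset.Ico (k*2^(n-j)) ((k+1)*2^(n-j)) ⊆ Finset.range (2^n) := by
    intro i hi
    rw [Finset.mem_Ico] at hi
    rw [Finset.mem_range]
    have hup : (k+1)*2^(n-j) ≤ 2^n := by
      calc (k+1)*2^(n-j) ≤ 2^j * 2^(n-j) := Nat.mul_le_mul_right _ hk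
      _ = 2^n := by rw [← pow_add, Nat.add_sub_cancel' hj]
    omega
  rw [← Finset.sum_subset hsub (by
    intro i _ hni
    rw [Finset.mem_Ico] at hni
    rw [grid_zero W hW0 hWeven hWodd n j k l i hj (by omega)]
    ring)]
  have hba : (k+1)*2^(n-j) = k*2^(n-j) + 2^(n-j) := by ring
  rw [hba, Finset.sum_Ico_eq_sum_range]
  have hred : k * 2 ^ (n - j) + 2 ^ (n - j) - k * 2 ^ (n - j) = 2^(n-j) := by omega
  rw [hred]
  have hterm : ∀ i' ∈ Finset.range (2^(n-j)),
      (Real.sqrt ((2:ℝ)^j) * W l ((2:ℝ)^j * (((k * 2^(n-j) + i' : ℕ):ℝ)/2^n) - k)) *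
      (Real.sqrt ((2:ℝ)^j) * W l ((2:ℝ)^j * (((k * 2^(n-j) + i' : ℕ):ℝ)/2^n) - k))
      = (2:ℝ)^j * (W l ((i':ℝ)/2^(n-j)) * W l ((i':ℝ)/2^(n-j))) := by
    intro i' _
    rw [grid_val n j k i' hj]
    have : Real.sqrt ((2:ℝ)^j) * Real.sqrt ((2:ℝ)^j) = (2:ℝ)^j :=
      Real.mul_self_sqrt (by positivity)
    nlinarith [this]
  calc ∑ i' ∈ Finset.range (2^(n-j)),
        (Real.sqrt ((2:ℝ)^j) * W l ((2:ℝ)^j * (((k * 2^(n-j) + i' : ℕ):ℝ)/2^n) - k)) *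
        (Real.sqrt ((2:ℝ)^j) * W l ((2:ℝ)^j * (((k * 2^(n-j) + i' : ℕ):ℝ)/2^n) - k))
      = ∑ i' ∈ Finset.range (2^(n-j)), (2:ℝ)^j * (W l ((i':ℝ)/2^(n-j)) * W l ((i':ℝ)/2^(n-j))) :=
        Finset.sum_congr rfl hterm
    _ = (2:ℝ)^j * ∑ i' ∈ Finset.range (2^(n-j)), W l ((i':ℝ)/2^(n-j)) * W l ((i':ℝ)/2^(n-j)) := by
        rw [Finset.mul_sum]
    _ = (2:ℝ)^j * (if l = l then (2^(n-j):ℝ) else 0) := by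
        rw [walsh_disc_orth W hW0 hWeven hWodd (n-j) l l hl hl]
    _ = 2^n := by rw [if_pos rfl, ← pow_add, Nat.add_sub_cancel' hj]

lemma tile_sum_cross (n j k l j' k' l' : ℕ) (hj : j ≤ n) (hj' : j' ≤ n) (hjj' : j ≤ j')
    (hk : k < 2^j) (hk' : k' < 2^j') (hl : l < 2^(n-j)) (hl' : l' < 2^(n-j'))
    (hd : Disjoint (tile (j,k,l)) (tile (j',k',l'))) :
    ∑ i ∈ Finset.range (2^n),
      (Real.sqrt ((2:ℝ)^j) * W l ((2:ℝ)^j * ((i:ℝ)/2^n) - k)) *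
      (Real.sqrt ((2:ℝ)^j') * W l' ((2:ℝ)^j' * ((i:ℝ)/2^n) - k')) = 0 := by
  have hsplitn : 2^(n-j) = 2^(j'-j) * 2^(n-j') := by
    rw [← pow_add]; congr 1; omega
  by_cases hA : (k'+1)*2^(n-j') ≤ k*2^(n-j) ∨ (k+1)*2^(n-j) ≤ k'*2^(n-j')
  · -- index ranges disjoint: every term vanishes
    apply Finset.sum_eq_zero
    intro i _
    by_cases hiq : k'*2^(n-j') ≤ i ∧ i < (k'+1)*2^(n-j')
    · rw [grid_zero W hW0 hWeven hWodd n j k l i hj (by omega)]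
      ring
    · rw [grid_zero W hW0 hWeven hWodd n j' k' l' i hj' (by omega)]
      ring
  · push_neg at hA
    obtain ⟨hA1, hA2⟩ := hA
    -- nested: derive 2^(j'-j)*k ≤ k' < 2^(j'-j)*(k+1)
    have hc'pos : 0 < 2^(n-j') := Nat.pow_pos (by norm_num)
    have hnest1 : 2^(j'-j) * k ≤ k' := by
      have h1 : (k+1)*2^(n-j) = ((k+1)*2^(j'-j)) * 2^(n-j') := by rw [hsplitn]; ring
      rw [h1] at hA2
      have := Nat.lt_of_mul_lt_mul_right (hA2.trans_le le_rfl)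
      nlinarith [this]
    have hnest2 : k' < 2^(j'-j) * (k+1) := by
      have h1 : k*2^(n-j) = (k*2^(j'-j)) * 2^(n-j') := by rw [hsplitn]; ring
      rw [h1] at hA1
      have := Nat.lt_of_mul_lt_mul_right hA1
      nlinarith [this]
    have hlne : l / 2^(j'-j) ≠ l' := tile_cases j k l j' k' l' hjj' hd hnest1 hnest2
    set r := k' - 2^(j'-j) * k with hr
    have hexp2 : 2^(j'-j)*(k+1) = 2^(j'-j)*k + 2^(j'-j) := by ring
    have hrlt : r < 2^(j'-j) := by omega
    have hk'eq : k' = 2^(j'-j) * k + r := by omega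
    obtain ⟨ε, hε⟩ := walsh_restrict W hW0 hWeven hWodd (j'-j) l r hrlt
    have hsub : Finset.Ico (k'*2^(n-j')) ((k'+1)*2^(n-j')) ⊆ Finset.range (2^n) := by
      intro i hi
      rw [Finset.mem_Ico] at hi
      rw [Finset.mem_range]
      have hup : (k'+1)*2^(n-j') ≤ 2^n := by
        calc (k'+1)*2^(n-j') ≤ 2^j' * 2^(n-j') := Nat.mul_le_mul_right _ hk'
        _ = 2^n := by rw [← pow_add, Nat.add_sub_cancel' hj']
      omega
    rw [← Finset.sum_subset hsub (by
      intro i _ hni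
      rw [Finset.mem_Ico] at hni
      rw [grid_zero W hW0 hWeven hWodd n j' k' l' i hj' (by omega)]
      ring)]
    have hba : (k'+1)*2^(n-j') = k'*2^(n-j') + 2^(n-j') := by ring
    rw [hba, Finset.sum_Ico_eq_sum_range]
    have hred : k' * 2 ^ (n - j') + 2 ^ (n - j') - k' * 2 ^ (n - j') = 2^(n-j') := by omega
    rw [hred]
    have hterm : ∀ i' ∈ Finset.range (2^(n-j')),
        (Real.sqrt ((2:ℝ)^j) * W l ((2:ℝ)^j * (((k' * 2^(n-j') + i' : ℕ):ℝ)/2^n) - k)) *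
        (Real.sqrt ((2:ℝ)^j') * W l' ((2:ℝ)^j' * (((k' * 2^(n-j') + i' : ℕ):ℝ)/2^n) - k'))
        = (Real.sqrt ((2:ℝ)^j) * Real.sqrt ((2:ℝ)^j') * ε) *
          (W (l / 2^(j'-j)) ((i':ℝ)/2^(n-j')) * W l' ((i':ℝ)/2^(n-j'))) := by
      intro i' hi'
      rw [Finset.mem_range] at hi'
      -- second factor argument
      rw [grid_val n j' k' i' hj']
      -- first factor: rewrite index
      have hidx : k' * 2^(n-j') + i' = k * 2^(n-j) + (r * 2^(n-j') + i') := by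
        rw [hsplitn, hk'eq]; ring
      rw [hidx, grid_val n j k (r * 2^(n-j') + i') hj]
      -- now the restriction
      have hjd : j' - j ≤ n - j := by omega
      have hexp : (n-j) - (j'-j) = n - j' := by omega
      have hbnd := grid_bounds (n-j) (j'-j) r i' hjd (by rw [hexp]; exact hi')
      rw [hexp] at hbnd
      have hval := hε (((r * 2^(n-j') + i' : ℕ):ℝ)/2^(n-j)) hbnd.1 hbnd.2
      have harg : (2:ℝ)^(j'-j) * (((r * 2^(n-j') + i' : ℕ):ℝ)/2^(n-j)) - r = (i':ℝ)/2^(n-j') := by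
        have := grid_val (n-j) (j'-j) r i' hjd
        rw [hexp] at this
        exact this
      rw [hval, harg]
      ring
    rw [Finset.sum_congr rfl hterm, ← Finset.mul_sum,
      walsh_disc_orth W hW0 hWeven hWodd (n-j') (l / 2^(j'-j)) l' ?_ hl', if_neg hlne, mul_zero]
    have : l < 2^(n-j') * 2^(j'-j) := by rw [mul_comm, ← hsplitn]; exact hl
    exact Nat.div_lt_of_lt_mul (by rw [mul_comm]; exact this)

lemma wv_outside (j k l : ℕ) (hk : k < 2^j) (t : ℝ) (ht : t < 0 ∨ 1 ≤ t) :
    W l ((2:ℝ)^j * t - k) = 0 := by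
  apply walsh_supp W hW0 hWeven hWodd
  have h3 : (0:ℝ) < 2^j := by positivity
  have hkR : (k:ℝ) + 1 ≤ 2^j := by exact_mod_cast Nat.succ_le_of_lt hk
  rcases ht with h | h
  · left; nlinarith [Nat.cast_nonneg (α := ℝ) k]
  · right; nlinarith

lemma wv_cell (n j k l : ℕ) (hj : j ≤ n) (hk : k < 2^j) (hl : l < 2^(n-j))
    (i : ℕ) (hi : i < 2^n) (s t : ℝ)
    (hs1 : (i:ℝ)/2^n ≤ s) (hs2 : s < ((i:ℝ)+1)/2^n)
    (ht1 : (i:ℝ)/2^n ≤ t) (ht2 : t < ((i:ℝ)+1)/2^n) :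
    W l ((2:ℝ)^j * s - k) = W l ((2:ℝ)^j * t - k) := by
  have hP : (2:ℝ)^n = 2^j * 2^(n-j) := by rw [← pow_add, Nat.add_sub_cancel' hj]
  have h1 : (0:ℝ) < 2^n := by positivity
  have h2 : (0:ℝ) < 2^(n-j) := by positivity
  have h3 : (0:ℝ) < 2^j := by positivity
  by_cases hin : k*2^(n-j) ≤ i ∧ i < (k+1)*2^(n-j)
  · obtain ⟨hinl, hinr⟩ := hin
    set i' := i - k*2^(n-j) with hi'
    have hieq : i = k*2^(n-j) + i' := by omega
    have hi'lt : i' < 2^(n-j) := by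
      have : (k+1)*2^(n-j) = k*2^(n-j) + 2^(n-j) := by ring
      omega
    have hlow : ∀ u : ℝ, (i:ℝ)/2^n ≤ u → (i':ℝ)/2^(n-j) ≤ (2:ℝ)^j * u - k := by
      intro u hu
      have hgv : (2:ℝ)^j * (((k * 2^(n-j) + i' : ℕ):ℝ)/2^n) - k = (i':ℝ)/2^(n-j) :=
        grid_val n j k i' hj
      rw [← hieq] at hgv
      rw [← hgv]
      have : (2:ℝ)^j * ((i:ℝ)/2^n) ≤ (2:ℝ)^j * u := by
        apply mul_le_mul_of_nonneg_left hu (by positivity)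
      linarith
    have hhigh : ∀ u : ℝ, u < ((i:ℝ)+1)/2^n → (2:ℝ)^j * u - k < ((i':ℝ)+1)/2^(n-j) := by
      intro u hu
      have hgv : (2:ℝ)^j * (((k * 2^(n-j) + (i'+1) : ℕ):ℝ)/2^n) - k = ((i'+1:ℕ):ℝ)/2^(n-j) :=
        grid_val n j k (i'+1) hj
      have hc1 : ((k * 2^(n-j) + (i'+1) : ℕ):ℝ) = (i:ℝ) + 1 := by
        rw [hieq]; push_cast; ring
      rw [hc1] at hgv
      push_cast at hgv
      rw [← hgv]
      have : (2:ℝ)^j * u < (2:ℝ)^j * (((i:ℝ)+1)/2^n) := by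
        apply mul_lt_mul_of_pos_left hu (by positivity)
      linarith
    exact walsh_const W hW0 hWeven hWodd (n-j) l i' hl hi'lt _ _
      (hlow s hs1) (hhigh s hs2) (hlow t ht1) (hhigh t ht2)
  · have hzero : ∀ u : ℝ, (i:ℝ)/2^n ≤ u → u < ((i:ℝ)+1)/2^n → W l ((2:ℝ)^j * u - k) = 0 := by
      intro u hu1 hu2
      apply walsh_supp W hW0 hWeven hWodd
      rcases not_and_or.mp hin with ho | ho
      · push_neg at ho
        left
        have hnat : i + 1 ≤ k*2^(n-j) := ho
        have hR : (i:ℝ) + 1 ≤ (k:ℝ)*2^(n-j) := by exact_mod_cast hnat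
        have : (2:ℝ)^j * u < (2:ℝ)^j * (((i:ℝ)+1)/2^n) :=
          mul_lt_mul_of_pos_left hu2 (by positivity)
        have h4 : (2:ℝ)^j * (((i:ℝ)+1)/2^n) ≤ k := by
          rw [mul_div_assoc', div_le_iff₀ h1, hP]; nlinarith
        linarith
      · push_neg at ho
        right
        have hR : ((k:ℝ)+1)*2^(n-j) ≤ (i:ℝ) := by exact_mod_cast ho
        have : (2:ℝ)^j * ((i:ℝ)/2^n) ≤ (2:ℝ)^j * u :=
          mul_le_mul_of_nonneg_left hu1 (by positivity)
        have h4 : (k:ℝ)+1 ≤ (2:ℝ)^j * ((i:ℝ)/2^n) := by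
          rw [mul_div_assoc', le_div_iff₀ h1, hP]; nlinarith
        linarith
    rw [hzero s hs1 hs2, hzero t ht1 ht2]

end walsh

lemma step_integral (n : ℕ) (g : ℝ → ℝ)
    (hg0 : ∀ t : ℝ, t < 0 ∨ 1 ≤ t → g t = 0)
    (hgc : ∀ i : ℕ, i < 2^n → ∀ t : ℝ, (i:ℝ)/2^n ≤ t → t < ((i:ℝ)+1)/2^n →
      g t = g ((i:ℝ)/2^n)) :
    ∫ t in (0:ℝ)..1, g t = (∑ i ∈ Finset.range (2^n), g ((i:ℝ)/2^n)) / 2^n := by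
  have hp : (0:ℝ) < 2^n := by positivity
  have hrep : ∀ t : ℝ, g t = ∑ i ∈ Finset.range (2^n),
      Set.indicator (Set.Ico ((i:ℝ)/2^n) (((i:ℝ)+1)/2^n)) (fun _ => g ((i:ℝ)/2^n)) t := by
    intro t
    by_cases ht0 : t < 0
    · rw [hg0 t (Or.inl ht0)]
      symm
      apply Finset.sum_eq_zero
      intro i _
      apply Set.indicator_of_notMem
      rw [Set.mem_Ico]
      push_neg
      intro h
      linarith [show (0:ℝ) ≤ (i:ℝ)/2^n by positivity]
    · push_neg at ht0
      by_cases ht1 : 1 ≤ t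
      · rw [hg0 t (Or.inr ht1)]
        symm
        apply Finset.sum_eq_zero
        intro i hi
        rw [Finset.mem_range] at hi
        apply Set.indicator_of_notMem
        rw [Set.mem_Ico]
        push_neg
        intro _
        have : ((i:ℝ)+1)/2^n ≤ 1 := by
          rw [div_le_one hp]
          have : (i:ℝ)+1 ≤ 2^n := by exact_mod_cast Nat.succ_le_of_lt hi
          exact this
        linarith
      · push_neg at ht1
        set i0 := ⌊(2:ℝ)^n * t⌋₊ with hi0
        have hge : (0:ℝ) ≤ 2^n * t := by positivity
        have hfl : (i0:ℝ) ≤ 2^n * t := Nat.floor_le hge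
        have hfu : (2:ℝ)^n * t < i0 + 1 := Nat.lt_floor_add_one _
        have hi0lt : i0 < 2^n := by
          have : (2:ℝ)^n * t < 2^n := by nlinarith
          have h2 : (i0:ℝ) < 2^n := lt_of_le_of_lt hfl this
          exact_mod_cast h2
        rw [Finset.sum_eq_single i0]
        · rw [Set.indicator_of_mem]
          · exact hgc i0 hi0lt t (by rw [div_le_iff₀ hp]; linarith) (by rw [lt_div_iff₀ hp]; linarith)
          · rw [Set.mem_Ico]
            constructor
            · rw [div_le_iff₀ hp]; linarith
            · rw [lt_div_iff₀ hp]; linarith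
        · intro i _ hne
          apply Set.indicator_of_notMem
          rw [Set.mem_Ico]
          push_neg
          intro hle
          rw [div_le_iff₀ hp] at hle
          by_contra hlt
          push_neg at hlt
          rw [lt_div_iff₀ hp] at hlt
          have h1 : (i:ℝ) ≤ 2^n * t := by linarith
          have h2 : (2:ℝ)^n * t < i + 1 := by push_cast; linarith
          have heq : i0 = i := (Nat.floor_eq_iff hge).mpr ⟨by exact_mod_cast h1, by push_cast; exact h2⟩
          exact hne heq.symm
        · intro h
          exact absurd (Finset.mem_range.mpr hi0lt) h
  have hint : ∀ i ∈ Finset.range (2^n), IntervalIntegrable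
      (Set.indicator (Set.Ico ((i:ℝ)/2^n) (((i:ℝ)+1)/2^n)) (fun _ => g ((i:ℝ)/2^n)))
      volume (0:ℝ) 1 := by
    intro i _
    apply MeasureTheory.IntegrableOn.intervalIntegrable
    apply MeasureTheory.Integrable.indicator
    · refine (integrableOn_const_iff).mpr (Or.inr ?_)
      rw [Set.uIcc_of_le (by norm_num : (0:ℝ) ≤ 1)]
      exact measure_Icc_lt_top
    · exact measurableSet_Ico
  rw [intervalIntegral.integral_congr (fun t _ => hrep t),
    intervalIntegral.integral_finset_sum hint]
  have hval : ∀ i ∈ Finset.range (2^n),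
      (∫ t in (0:ℝ)..1, Set.indicator (Set.Ico ((i:ℝ)/2^n) (((i:ℝ)+1)/2^n))
        (fun _ => g ((i:ℝ)/2^n)) t) = g ((i:ℝ)/2^n) / 2^n := by
    intro i hi
    rw [Finset.mem_range] at hi
    set a := (i:ℝ)/2^n with ha
    set b := ((i:ℝ)+1)/2^n with hb
    have ha0 : 0 ≤ a := by positivity
    have hab : a < b := by
      rw [ha, hb, div_lt_div_iff₀ hp hp]; nlinarith [Nat.cast_nonneg (α := ℝ) i]
    have hba : b - a = 1/2^n := by rw [ha, hb]; field_simp; ring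
    rw [intervalIntegral.integral_of_le zero_le_one,
      MeasureTheory.setIntegral_indicator measurableSet_Ico,
      MeasureTheory.setIntegral_const]
    have hvol : volume (Set.Ioc (0:ℝ) 1 ∩ Set.Ico a b) = ENNReal.ofReal (b - a) := by
      apply le_antisymm
      · calc volume (Set.Ioc (0:ℝ) 1 ∩ Set.Ico a b) ≤ volume (Set.Ico a b) :=
            measure_mono Set.inter_subset_right
          _ = ENNReal.ofReal (b - a) := Real.volume_Ico
      · calc ENNReal.ofReal (b - a) = volume (Set.Ioo a b) := Real.volume_Ioo.symm
          _ ≤ volume (Set.Ioc (0:ℝ) 1 ∩ Set.Ico a b) := by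
            apply measure_mono
            intro x hx
            rw [Set.mem_Ioo] at hx
            have hb1 : b ≤ 1 := by
              rw [hb, div_le_one hp]
              have : (i:ℝ)+1 ≤ 2^n := by exact_mod_cast Nat.succ_le_of_lt hi
              exact this
            exact ⟨⟨lt_of_le_of_lt ha0 hx.1, le_trans hx.2.le hb1⟩, hx.1.le, hx.2⟩
    rw [measureReal_def, hvol, hba, ENNReal.toReal_ofReal (by positivity), smul_eq_mul]
    ring
  rw [Finset.sum_congr rfl hval, ← Finset.sum_div]

lemma tile_volume (p : ℕ × ℕ × ℕ) : volume (tile p) = 1 := by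
  obtain ⟨j, k, l⟩ := p
  rw [tile]
  rw [Measure.volume_eq_prod, Measure.prod_prod, Real.volume_Ico, Real.volume_Ico]
  have h1 : (2:ℝ)^(-(j:ℤ)) * ((k:ℝ) + 1) - (2:ℝ)^(-(j:ℤ)) * k = (2:ℝ)^(-(j:ℤ)) := by ring
  have h2 : (2:ℝ)^(j:ℤ) * ((l:ℝ) + 1) - (2:ℝ)^(j:ℤ) * l = (2:ℝ)^(j:ℤ) := by ring
  simp only [h1, h2]
  rw [← ENNReal.ofReal_mul (by positivity)]
  rw [← zpow_add₀ (by norm_num : (2:ℝ) ≠ 0)]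
  simp

lemma card_of_cover (n : ℕ) (B : Finset (ℕ × ℕ × ℕ))
    (hdisj : (B : Set (ℕ × ℕ × ℕ)).PairwiseDisjoint tile)
    (hcover : (⋃ p ∈ B, tile p) =
      Set.Ico (0:ℝ) 1 ×ˢ Set.Ico (0:ℝ) ((2:ℝ) ^ n)) :
    B.card = 2^n := by
  have hmeas : ∀ p ∈ B, MeasurableSet (tile p) := by
    intro p _
    exact (measurableSet_Ico).prod (measurableSet_Ico)
  have key := measure_biUnion_finset (μ := volume) hdisj hmeas
  rw [hcover] at key
  simp only [tile_volume, Finset.sum_const, nsmul_eq_mul, mul_one] at key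
  rw [Measure.volume_eq_prod, Measure.prod_prod, Real.volume_Ico, Real.volume_Ico,
    sub_zero, sub_zero, ENNReal.ofReal_one, one_mul] at key
  have h2 : ENNReal.ofReal ((2:ℝ)^n) = ((2^n : ℕ) : ENNReal) := by
    rw [ENNReal.ofReal_pow (by norm_num)]
    push_cast
    norm_num
  rw [h2] at key
  exact_mod_cast key.symm


/-- if a finite collection of tiles forms a disjoint covering of
`S_n = [0,1) × [0,2^n)`, then the corresponding rescaled Walsh functions
`w_p(t) = 2^{j/2} W_l(2^j t - k)` form an orthonormal basis of the
`2^n`-dimensional space of functions supported on `[0,1)` that are constant on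
each dyadic interval `[k 2^{-n}, (k+1) 2^{-n})`: they are orthonormal in
`L²[0,1)`, and every such function is a linear combination of them. -/
theorem tiling_gives_onb
    (W : ℕ → ℝ → ℝ)
    (hW0 : ∀ t : ℝ, W 0 t = if 0 ≤ t ∧ t < 1 then 1 else 0)
    (hWeven : ∀ (l : ℕ) (t : ℝ),
      W (2 * l) t = W l (2 * t) + (-1 : ℝ) ^ l * W l (2 * t - 1))
    (hWodd : ∀ (l : ℕ) (t : ℝ),
      W (2 * l + 1) t = W l (2 * t) - (-1 : ℝ) ^ l * W l (2 * t - 1))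
    (w : ℕ × ℕ × ℕ → ℝ → ℝ)
    (hw : ∀ (p : ℕ × ℕ × ℕ) (t : ℝ),
      w p t = Real.sqrt ((2:ℝ) ^ p.1) * W p.2.2 ((2:ℝ) ^ p.1 * t - p.2.1))
    (n : ℕ) (B : Finset (ℕ × ℕ × ℕ))
    (hdom : ∀ p ∈ B, p.1 ≤ n ∧ p.2.1 < 2 ^ p.1 ∧ p.2.2 < 2 ^ (n - p.1))
    (hdisj : (B : Set (ℕ × ℕ × ℕ)).PairwiseDisjoint tile)
    (hcover : (⋃ p ∈ B, tile p) =
      Set.Ico (0:ℝ) 1 ×ˢ Set.Ico (0:ℝ) ((2:ℝ) ^ n)) :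
    (∀ p ∈ B, ∀ q ∈ B,
        (∫ t in (0:ℝ)..1, w p t * w q t) = if p = q then 1 else 0) ∧
    (∀ f : ℝ → ℝ,
        (∀ t : ℝ, t < 0 ∨ 1 ≤ t → f t = 0) →
        (∀ k : ℕ, k < 2 ^ n → ∀ s t : ℝ,
          s ∈ Set.Ico ((k:ℝ) * (2:ℝ)^(-(n:ℤ))) (((k:ℝ)+1) * (2:ℝ)^(-(n:ℤ))) →
          t ∈ Set.Ico ((k:ℝ) * (2:ℝ)^(-(n:ℤ))) (((k:ℝ)+1) * (2:ℝ)^(-(n:ℤ))) →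
          f s = f t) →
        ∃ c : ℕ × ℕ × ℕ → ℝ, ∀ t : ℝ, f t = ∑ p ∈ B, c p * w p t) := by
  have hpn : (0:ℝ) < 2^n := by positivity
  have hgrid2 : ∀ i : ℕ, (i:ℝ)/2^n < ((i:ℝ)+1)/2^n := by
    intro i
    rw [div_lt_div_iff₀ hpn hpn]
    nlinarith [Nat.cast_nonneg (α := ℝ) i]
  have hwcell : ∀ p ∈ B, ∀ i : ℕ, i < 2^n → ∀ t : ℝ,
      (i:ℝ)/2^n ≤ t → t < ((i:ℝ)+1)/2^n → w p t = w p ((i:ℝ)/2^n) := by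
    intro p hp i hi t h1 h2
    obtain ⟨hj, hk, hl⟩ := hdom p hp
    rw [hw p t, hw p ((i:ℝ)/2^n),
      wv_cell W hW0 hWeven hWodd n p.1 p.2.1 p.2.2 hj hk hl i hi t ((i:ℝ)/2^n)
        h1 h2 (le_refl _) (hgrid2 i)]
  have hwout : ∀ p ∈ B, ∀ t : ℝ, t < 0 ∨ 1 ≤ t → w p t = 0 := by
    intro p hp t ht
    obtain ⟨hj, hk, hl⟩ := hdom p hp
    rw [hw p t, wv_outside W hW0 hWeven hWodd p.1 p.2.1 p.2.2 hk t ht, mul_zero]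
  have hdot : ∀ p ∈ B, ∀ q ∈ B,
      ∑ i ∈ Finset.range (2^n), w p ((i:ℝ)/2^n) * w q ((i:ℝ)/2^n)
        = if p = q then (2^n : ℝ) else 0 := by
    intro p hp q hq
    obtain ⟨hjp, hkp, hlp⟩ := hdom p hp
    obtain ⟨hjq, hkq, hlq⟩ := hdom q hq
    by_cases hpq : p = q
    · subst hpq
      rw [if_pos rfl]
      calc ∑ i ∈ Finset.range (2^n), w p ((i:ℝ)/2^n) * w p ((i:ℝ)/2^n)
          = ∑ i ∈ Finset.range (2^n),
            (Real.sqrt ((2:ℝ)^p.1) * W p.2.2 ((2:ℝ)^p.1 * ((i:ℝ)/2^n) - p.2.1)) *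
            (Real.sqrt ((2:ℝ)^p.1) * W p.2.2 ((2:ℝ)^p.1 * ((i:ℝ)/2^n) - p.2.1)) :=
            Finset.sum_congr rfl (fun i _ => by rw [hw p])
        _ = 2^n := tile_sum_diag W hW0 hWeven hWodd n p.1 p.2.1 p.2.2 hjp hkp hlp
    · rw [if_neg hpq]
      have hdisjpq : Disjoint (tile p) (tile q) := hdisj hp hq hpq
      rcases le_total p.1 q.1 with hle | hle
      · calc ∑ i ∈ Finset.range (2^n), w p ((i:ℝ)/2^n) * w q ((i:ℝ)/2^n)
            = ∑ i ∈ Finset.range (2^n),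
              (Real.sqrt ((2:ℝ)^p.1) * W p.2.2 ((2:ℝ)^p.1 * ((i:ℝ)/2^n) - p.2.1)) *
              (Real.sqrt ((2:ℝ)^q.1) * W q.2.2 ((2:ℝ)^q.1 * ((i:ℝ)/2^n) - q.2.1)) :=
              Finset.sum_congr rfl (fun i _ => by rw [hw p, hw q])
          _ = 0 := tile_sum_cross W hW0 hWeven hWodd n p.1 p.2.1 p.2.2 q.1 q.2.1 q.2.2
              hjp hjq hle hkp hkq hlp hlq hdisjpq
      · calc ∑ i ∈ Finset.range (2^n), w p ((i:ℝ)/2^n) * w q ((i:ℝ)/2^n)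
            = ∑ i ∈ Finset.range (2^n),
              (Real.sqrt ((2:ℝ)^q.1) * W q.2.2 ((2:ℝ)^q.1 * ((i:ℝ)/2^n) - q.2.1)) *
              (Real.sqrt ((2:ℝ)^p.1) * W p.2.2 ((2:ℝ)^p.1 * ((i:ℝ)/2^n) - p.2.1)) :=
              Finset.sum_congr rfl (fun i _ => by rw [hw p, hw q]; ring)
          _ = 0 := tile_sum_cross W hW0 hWeven hWodd n q.1 q.2.1 q.2.2 p.1 p.2.1 p.2.2
              hjq hjp hle hkq hkp hlq hlp hdisjpq.symm
  constructor
  · intro p hp q hq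
    have hg0 : ∀ t : ℝ, t < 0 ∨ 1 ≤ t → w p t * w q t = 0 := by
      intro t ht
      rw [hwout p hp t ht, zero_mul]
    have hgc : ∀ i : ℕ, i < 2^n → ∀ t : ℝ, (i:ℝ)/2^n ≤ t → t < ((i:ℝ)+1)/2^n →
        w p t * w q t = w p ((i:ℝ)/2^n) * w q ((i:ℝ)/2^n) := by
      intro i hi t h1 h2
      rw [hwcell p hp i hi t h1 h2, hwcell q hq i hi t h1 h2]
    rw [step_integral n (fun t => w p t * w q t) hg0 hgc, hdot p hp q hq]
    by_cases hpq : p = q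
    · rw [if_pos hpq, if_pos hpq]
      field_simp
    · rw [if_neg hpq, if_neg hpq, zero_div]
  · intro f hf0 hfc
    have hconv : ∀ x : ℝ, x * (2:ℝ)^(-(n:ℤ)) = x/2^n := by
      intro x
      rw [zpow_neg, zpow_natCast, div_eq_mul_inv]
    have hfc' : ∀ i : ℕ, i < 2^n → ∀ s t : ℝ,
        (i:ℝ)/2^n ≤ s → s < ((i:ℝ)+1)/2^n → (i:ℝ)/2^n ≤ t → t < ((i:ℝ)+1)/2^n →
        f s = f t := by
      intro i hi s t hs1 hs2 ht1 ht2
      apply hfc i hi s t <;> rw [Set.mem_Ico, hconv, hconv]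
      · exact ⟨hs1, hs2⟩
      · exact ⟨ht1, ht2⟩
    have hcard := card_of_cover n B hdisj hcover
    have hBne : B.Nonempty := Finset.card_pos.mp (by rw [hcard]; positivity)
    haveI : Nonempty ↥B := ⟨⟨hBne.choose, hBne.choose_spec⟩⟩
    set v : ↥B → (Fin (2^n) → ℝ) := fun p i => w p.1 ((i:ℝ)/2^n) with hv
    have hdotv : ∀ p q : ↥B, ∑ i : Fin (2^n), v p i * v q i
        = if p = q then (2^n:ℝ) else 0 := by
      intro p q
      calc ∑ i : Fin (2^n), v p i * v q i
          = ∑ i ∈ Finset.range (2^n), w p.1 ((i:ℝ)/2^n) * w q.1 ((i:ℝ)/2^n) :=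
            Fin.sum_univ_eq_sum_range
              (fun i : ℕ => w p.1 ((i:ℝ)/2^n) * w q.1 ((i:ℝ)/2^n)) (2^n)
        _ = if p.1 = q.1 then (2^n:ℝ) else 0 := hdot p.1 p.2 q.1 q.2
        _ = if p = q then (2^n:ℝ) else 0 := by
            by_cases h : p = q
            · rw [if_pos h, if_pos (by rw [h])]
            · rw [if_neg h, if_neg (fun hc => h (Subtype.ext hc))]
    have hli : LinearIndependent ℝ v := by
      rw [Fintype.linearIndependent_iff]
      intro g hg q
      have happ : ∀ i : Fin (2^n), (∑ p : ↥B, g p * v p i) = 0 := by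
        intro i
        have := congrFun hg i
        simpa [Finset.sum_apply, smul_eq_mul] using this
      have h0 : ∑ i : Fin (2^n), (∑ p : ↥B, g p * v p i) * v q i = 0 := by
        apply Finset.sum_eq_zero
        intro i _
        rw [happ i, zero_mul]
      have h1 : ∑ i : Fin (2^n), (∑ p : ↥B, g p * v p i) * v q i
          = ∑ p : ↥B, g p * ∑ i : Fin (2^n), v p i * v q i := by
        calc ∑ i : Fin (2^n), (∑ p : ↥B, g p * v p i) * v q i
            = ∑ i : Fin (2^n), ∑ p : ↥B, (g p * v p i) * v q i := by
              apply Finset.sum_congr rfl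
              intro i _
              rw [Finset.sum_mul]
          _ = ∑ p : ↥B, ∑ i : Fin (2^n), (g p * v p i) * v q i := Finset.sum_comm
          _ = ∑ p : ↥B, g p * ∑ i : Fin (2^n), v p i * v q i := by
              apply Finset.sum_congr rfl
              intro p _
              rw [Finset.mul_sum]
              apply Finset.sum_congr rfl
              intro i _
              ring
      rw [h1] at h0
      simp only [hdotv, mul_ite, mul_zero] at h0
      rw [Finset.sum_ite_eq' Finset.univ q (fun p => g p * (2^n:ℝ)),
        if_pos (Finset.mem_univ q)] at h0
      have := mul_eq_zero.mp h0
      rcases this with h | h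
      · exact h
      · exact absurd h (by positivity)
    have hfinrank : Fintype.card ↥B = Module.finrank ℝ (Fin (2^n) → ℝ) := by
      rw [Fintype.card_coe, hcard, Module.finrank_fintype_fun_eq_card, Fintype.card_fin]
    let bas := basisOfLinearIndependentOfCardEqFinrank hli hfinrank
    have hbas : ⇑bas = v := coe_basisOfLinearIndependentOfCardEqFinrank hli hfinrank
    set u : Fin (2^n) → ℝ := fun i => f ((i:ℝ)/2^n) with hu
    have hrepr := bas.sum_repr u
    refine ⟨fun p => if h : p ∈ B then bas.repr u ⟨p, h⟩ else 0, ?_⟩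
    intro t
    by_cases ht : t < 0 ∨ 1 ≤ t
    · rw [hf0 t ht]
      symm
      apply Finset.sum_eq_zero
      intro p hp
      rw [hwout p hp t ht, mul_zero]
    · push_neg at ht
      obtain ⟨ht0, ht1⟩ := ht
      set i0 := ⌊(2:ℝ)^n * t⌋₊ with hi0def
      have hge : (0:ℝ) ≤ 2^n * t := by positivity
      have hfl : (i0:ℝ) ≤ 2^n * t := Nat.floor_le hge
      have hfu : (2:ℝ)^n * t < i0 + 1 := Nat.lt_floor_add_one _
      have hi0lt : i0 < 2^n := by
        have h2 : (i0:ℝ) < 2^n := by nlinarith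
        exact_mod_cast h2
      have hmem1 : (i0:ℝ)/2^n ≤ t := by rw [div_le_iff₀ hpn]; linarith
      have hmem2 : t < ((i0:ℝ)+1)/2^n := by rw [lt_div_iff₀ hpn]; linarith
      have hft : f t = f ((i0:ℝ)/2^n) :=
        hfc' i0 hi0lt t ((i0:ℝ)/2^n) hmem1 hmem2 (le_refl _) (hgrid2 i0)
      rw [hft, Finset.sum_congr rfl
        (fun p hp => by rw [hwcell p hp i0 hi0lt t hmem1 hmem2])]
      have hux : f ((i0:ℝ)/2^n) = u ⟨i0, hi0lt⟩ := rfl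
      have hval := congrFun hrepr ⟨i0, hi0lt⟩
      rw [hux, ← hval, Finset.sum_apply,
        ← Finset.sum_coe_sort B
          (fun p => (if h : p ∈ B then bas.repr u ⟨p, h⟩ else 0) * w p ((i0:ℝ)/2^n))]
      apply Finset.sum_congr rfl
      intro p _
      rw [Pi.smul_apply, smul_eq_mul, hbas, dif_pos p.2]
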